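/- arXiv:2202.02320 — 3 statements merged into one kernel-verified Lean document; each statement's English description precedes it below -/
import Mathlib

section
/- With the setup of the previous verification theorem (finite S, A, kernel P, reward r, and (J,V) solving J + V(s) = max_a ( r(s,a) + ∑_{s'} P(s'|s,a) V(s') )), let a* : S → A be a selector achieving the maximum at each state. Then the stationary policy a* achieves expected average reward satisfying (1/n)·E[∑_{t=0}^{n-1} r(S_t, a*(S_t))] ≥ J − (max_s V(s) − V(s0))/n for every initial state s0; hence the stationary greedy policy is average-reward optimal in the limit n → ∞. -/
open Classical

/-- Average-reward verification theorem (lower bound): the stationary greedy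
policy attaining the maximum in the Bellman equation achieves expected average
reward at least J − (max V − V(s0))/n, hence is average-reward optimal. -/
theorem bellman_greedy_lower_bound
    {S A : Type*} [Fintype S] [Fintype A] [Nonempty S] [Nonempty A]
    (P : S → A → S → ℝ) (hP0 : ∀ s a s', 0 ≤ P s a s')
    (hP1 : ∀ s a, ∑ s', P s a s' = 1)
    (r : S → A → ℝ) (J : ℝ) (V : S → ℝ)
    (hBellman : ∀ s, J + V s =
      Finset.univ.sup' Finset.univ_nonempty
        (fun a => r s a + ∑ s', P s a s' * V s'))
    (astar : S → A)
    (hstar : ∀ s, J + V s = r s (astar s) + ∑ s', P s (astar s) s' * V s')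
    (s0 : S) (μ : ℕ → S → ℝ)
    (hμ0 : ∀ s, μ 0 s = if s = s0 then 1 else 0)
    (hμ : ∀ t s', μ (t + 1) s' = ∑ s, μ t s * P s (astar s) s') :
    ∀ n : ℕ, 1 ≤ n →
      J - (Finset.univ.sup' Finset.univ_nonempty V - V s0) / n
        ≤ (1 / (n : ℝ)) * ∑ t ∈ Finset.range n, ∑ s, μ t s * r s (astar s) := by
  -- μ t is a probability distribution
  have hprob : ∀ t, (∀ s, 0 ≤ μ t s) ∧ ∑ s, μ t s = 1 := by
    intro t
    induction t with
    | zero =>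
      constructor
      · intro s; rw [hμ0]; split <;> norm_num
      · simp [hμ0]
    | succ t ih =>
      constructor
      · intro s'
        rw [hμ]
        exact Finset.sum_nonneg fun s _ => mul_nonneg (ih.1 s) (hP0 s _ s')
      · calc ∑ s', μ (t + 1) s' = ∑ s', ∑ s, μ t s * P s (astar s) s' := by
              simp only [hμ]
          _ = ∑ s, ∑ s', μ t s * P s (astar s) s' := Finset.sum_comm
          _ = ∑ s, μ t s * ∑ s', P s (astar s) s' := by
              simp [Finset.mul_sum]
          _ = 1 := by simp [hP1, ih.2]
  -- one-step identity
  have hstep : ∀ t, ∑ s, μ t s * r s (astar s)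
      = J + ∑ s, μ t s * V s - ∑ s', μ (t + 1) s' * V s' := by
    intro t
    have h1 : ∑ s, μ t s * (J + V s)
        = ∑ s, μ t s * (r s (astar s) + ∑ s', P s (astar s) s' * V s') := by
      apply Finset.sum_congr rfl
      intro s _
      rw [hstar s]
    have h2 : ∑ s, μ t s * (J + V s) = J + ∑ s, μ t s * V s := by
      simp only [mul_add, Finset.sum_add_distrib, ← Finset.sum_mul, (hprob t).2]
      ring
    have h3 : ∑ s, μ t s * (r s (astar s) + ∑ s', P s (astar s) s' * V s')
        = ∑ s, μ t s * r s (astar s) + ∑ s', μ (t + 1) s' * V s' := by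
      simp only [mul_add, Finset.sum_add_distrib]
      congr 1
      calc ∑ s, μ t s * ∑ s', P s (astar s) s' * V s'
          = ∑ s, ∑ s', μ t s * P s (astar s) s' * V s' := by
            simp [Finset.mul_sum, mul_assoc]
        _ = ∑ s', ∑ s, μ t s * P s (astar s) s' * V s' := Finset.sum_comm
        _ = ∑ s', μ (t + 1) s' * V s' := by
            apply Finset.sum_congr rfl
            intro s' _
            rw [hμ, Finset.sum_mul]
    rw [h2, h3] at h1
    linarith
  -- telescoping sum
  have htel : ∀ n : ℕ, ∑ t ∈ Finset.range n, ∑ s, μ t s * r s (astar s)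
      = n * J + ∑ s, μ 0 s * V s - ∑ s, μ n s * V s := by
    intro n
    induction n with
    | zero => simp
    | succ n ih =>
      rw [Finset.sum_range_succ, ih, hstep n]
      push_cast
      ring
  intro n hn
  have hn0 : (0 : ℝ) < n := by exact_mod_cast hn
  set M := Finset.univ.sup' Finset.univ_nonempty V with hM
  have hμ0V : ∑ s, μ 0 s * V s = V s0 := by
    simp [hμ0, Finset.sum_ite_eq']
  have hVM : ∀ s, V s ≤ M := fun s => Finset.le_sup' V (Finset.mem_univ s)
  have hend : ∑ s, μ n s * V s ≤ M := by
    calc ∑ s, μ n s * V s ≤ ∑ s, μ n s * M :=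
          Finset.sum_le_sum fun s _ => mul_le_mul_of_nonneg_left (hVM s) ((hprob n).1 s)
      _ = M := by rw [← Finset.sum_mul, (hprob n).2, one_mul]
  have key : n * J + V s0 - M ≤ ∑ t ∈ Finset.range n, ∑ s, μ t s * r s (astar s) := by
    rw [htel n, hμ0V]
    linarith
  have h1 : J - (M - V s0) / n = (1 / (n : ℝ)) * (n * J + V s0 - M) := by
    field_simp; ring
  rw [h1]
  exact mul_le_mul_of_nonneg_left key (by positivity)
end

section
/- Let the augmented belief update be defined (for finite sets) by: given π̃ on (M1 × M2) × (Π̂1 × Π̂2) of structured form π̃(m,p) = π(m)·[p1 = g1 m1]·[p2 = g2 m2], encodings e = (e1, e2), private-belief updates F̂1, F̂2, channel Q, and an output y with positive normalizer, the updated π̃' given by Bayes rule (equation (24) of the paper) is again of structured form: π̃'(m,p) = π'(m)·[p1 = g1' m1]·[p2 = g2' m2], where π' = F(π, e, y) is the Bayesian message-belief update and gi'(mi) = F̂i(gi mi, ei, ei mi). I.e., the structured (delta) form of the augmented common belief is invariant under the update F̃. -/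
open Classical

/-- The structured (delta) form of the augmented common belief is invariant
under the Bayes update F̃ (equation (24)): updating
π̃(m,p) = π(m)·[p1 = g1 m1]·[p2 = g2 m2] with output y yields
π̃'(m,p) = π'(m)·[p1 = g1' m1]·[p2 = g2' m2], where π' = F(π,e,y) and
gi'(mi) = F̂i(gi mi, ei, ei mi). -/
theorem structured_form_invariant_under_update
    {M1 M2 X1 X2 Y P1 P2 : Type*} [Fintype M1] [Fintype M2]
    [Fintype P1] [Fintype P2]
    (Q : Y → X1 × X2 → ℝ)
    (π : M1 × M2 → ℝ) (g1 : M1 → P1) (g2 : M2 → P2)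
    (e1 : M1 → X1) (e2 : M2 → X2) (y : Y)
    (Fhat1 : P1 → (M1 → X1) → X1 → P1) (Fhat2 : P2 → (M2 → X2) → X2 → P2)
    (hQ0 : ∀ y x, 0 ≤ Q y x) (hπ0 : ∀ m, 0 ≤ π m)
    (hZ : 0 < ∑ m : M1 × M2, Q y (e1 m.1, e2 m.2) * π m) :
    ∀ (m : M1 × M2) (p : P1 × P2),
      -- Bayes update (24) of the structured augmented belief …
      (∑ pprev : P1 × P2,
          (π m * (if pprev.1 = g1 m.1 then (1:ℝ) else 0) *
              (if pprev.2 = g2 m.2 then (1:ℝ) else 0)) *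
            Q y (e1 m.1, e2 m.2) *
            (if p.1 = Fhat1 pprev.1 e1 (e1 m.1) then (1:ℝ) else 0) *
            (if p.2 = Fhat2 pprev.2 e2 (e2 m.2) then (1:ℝ) else 0)) /
        (∑ m' : M1 × M2, ∑ p' : P1 × P2, ∑ pprev : P1 × P2,
          (π m' * (if pprev.1 = g1 m'.1 then (1:ℝ) else 0) *
              (if pprev.2 = g2 m'.2 then (1:ℝ) else 0)) *
            Q y (e1 m'.1, e2 m'.2) *
            (if p'.1 = Fhat1 pprev.1 e1 (e1 m'.1) then (1:ℝ) else 0) *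
            (if p'.2 = Fhat2 pprev.2 e2 (e2 m'.2) then (1:ℝ) else 0))
      -- … is again of structured form:
      = (Q y (e1 m.1, e2 m.2) * π m /
            (∑ m' : M1 × M2, Q y (e1 m'.1, e2 m'.2) * π m')) *
          (if p.1 = Fhat1 (g1 m.1) e1 (e1 m.1) then (1:ℝ) else 0) *
          (if p.2 = Fhat2 (g2 m.2) e2 (e2 m.2) then (1:ℝ) else 0) := by

  intro m p
  have key : ∀ (m : M1 × M2) (p : P1 × P2),
      (∑ pprev : P1 × P2,
          (π m * (if pprev.1 = g1 m.1 then (1:ℝ) else 0) *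
              (if pprev.2 = g2 m.2 then (1:ℝ) else 0)) *
            Q y (e1 m.1, e2 m.2) *
            (if p.1 = Fhat1 pprev.1 e1 (e1 m.1) then (1:ℝ) else 0) *
            (if p.2 = Fhat2 pprev.2 e2 (e2 m.2) then (1:ℝ) else 0))
      = π m * Q y (e1 m.1, e2 m.2) *
          (if p.1 = Fhat1 (g1 m.1) e1 (e1 m.1) then (1:ℝ) else 0) *
          (if p.2 = Fhat2 (g2 m.2) e2 (e2 m.2) then (1:ℝ) else 0) := by
    intro m p
    rw [Fintype.sum_prod_type]
    rw [Finset.sum_eq_single (g1 m.1)]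
    · rw [Finset.sum_eq_single (g2 m.2)]
      · simp
      · intro b _ hb; simp [hb]
      · simp
    · intro b _ hb; simp [hb]
    · simp
  have hden : (∑ m' : M1 × M2, ∑ p' : P1 × P2, ∑ pprev : P1 × P2,
          (π m' * (if pprev.1 = g1 m'.1 then (1:ℝ) else 0) *
              (if pprev.2 = g2 m'.2 then (1:ℝ) else 0)) *
            Q y (e1 m'.1, e2 m'.2) *
            (if p'.1 = Fhat1 pprev.1 e1 (e1 m'.1) then (1:ℝ) else 0) *
            (if p'.2 = Fhat2 pprev.2 e2 (e2 m'.2) then (1:ℝ) else 0))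
      = ∑ m' : M1 × M2, Q y (e1 m'.1, e2 m'.2) * π m' := by
    refine Finset.sum_congr rfl fun m' _ => ?_
    rw [funext fun p' => key m' p']
    rw [Fintype.sum_prod_type]
    rw [Finset.sum_eq_single (Fhat1 (g1 m'.1) e1 (e1 m'.1))]
    · rw [Finset.sum_eq_single (Fhat2 (g2 m'.2) e2 (e2 m'.2))]
      · simp; ring
      · intro b _ hb; simp [hb]
      · simp
    · intro b _ hb; simp [hb]
    · simp
  rw [key, hden]
  ring
end

section
/- Let S be a finite set, F : S × E × Y → S, and ν_{s,e} pmfs on Y as above. Let r̃ : S × E → ℝ be a reward and suppose there is a surjection ρ : S → S̄ onto a smaller set S̄ together with maps such that both the reward and the transition kernel factor through ρ: r̃(s, e) = r̄(ρ s, e) and for all s, e, s̄', ∑_{y : ρ(F(s,e,y)) = s̄'} ν_{s,e}(y) = P̄(s̄' | ρ s, e) for some kernel P̄ and reward r̄ on S̄ × E. If (J, V̄) solves the Bellman equation J + V̄(s̄) = max_e ( r̄(s̄,e) + ∑_{s̄'} P̄(s̄'|s̄,e) V̄(s̄') ) on S̄, then (J, V) with V = V̄ ∘ ρ solves the Bellman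 equation J + V(s) = max_e ( r̃(s,e) + E_{y ~ ν_{s,e}}[ V(F(s,e,y)) ] ) on S. In particular the optimal average reward J is the same for both dynamic programs. -/
open Classical

/-- Lumping / state-reduction lemma: if the reward and the transition dynamics
of the belief system factor through a surjection ρ : S → S̄, then any solution
(J, V̄) of the Bellman equation on the reduced state space lifts to a solution
(J, V̄ ∘ ρ) of the Bellman equation on the original state space; in particular
the optimal average reward J is the same for both dynamic programs. -/
theorem lumping_bellman_reduction
    {S Sbar E Y : Type*} [Fintype S] [Fintype Sbar] [Fintype E] [Fintype Y]
    [Nonempty E]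
    (F : S → E → Y → S) (ν : S → E → Y → ℝ)
    (hν0 : ∀ s e y, 0 ≤ ν s e y) (hν1 : ∀ s e, ∑ y, ν s e y = 1)
    (rt : S → E → ℝ) (ρ : S → Sbar) (hρ : Function.Surjective ρ)
    (rbar : Sbar → E → ℝ) (Pbar : Sbar → E → Sbar → ℝ)
    (hr : ∀ s e, rt s e = rbar (ρ s) e)
    (hker : ∀ s e sbar',
      ∑ y ∈ Finset.univ.filter (fun y => ρ (F s e y) = sbar'), ν s e y
        = Pbar (ρ s) e sbar')
    (J : ℝ) (Vbar : Sbar → ℝ)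
    (hBellbar : ∀ sbar, J + Vbar sbar =
      Finset.univ.sup' Finset.univ_nonempty
        (fun e => rbar sbar e + ∑ sbar', Pbar sbar e sbar' * Vbar sbar')) :
    ∀ s, J + Vbar (ρ s) =
      Finset.univ.sup' Finset.univ_nonempty
        (fun e => rt s e + ∑ y, ν s e y * Vbar (ρ (F s e y))) := by
  intro s
  rw [hBellbar (ρ s)]
  congr 1
  funext e
  rw [hr s e]
  congr 1
  rw [← Finset.sum_fiberwise (g := fun y => ρ (F s e y)) Finset.univ (fun y => ν s e y * Vbar (ρ (F s e y)))]
  refine Finset.sum_congr rfl fun sbar' _ => ?_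
  rw [← hker s e sbar', Finset.sum_mul]
  refine Finset.sum_congr rfl fun y hy => ?_
  simp only [Finset.mem_filter] at hy
  rw [hy.2]
end
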